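/- Let λ, μ ∈ gl_2(F). The 4-dimensional skew-symmetric algebra b(λ,μ) with basis a,b,x,y and products [a,x]=−[x,a]=λ₁₁x+λ₁₂y, [a,y]=−[y,a]=λ₂₁x+λ₂₂y, [b,x]=−[x,b]=μ₁₁x+μ₁₂y, [b,y]=−[y,b]=μ₂₁x+μ₂₂y is a Lie algebra if and only if λμ = μλ. -/
import Mathlib


/-- The bracket of the skew-symmetric 4-dimensional algebra `b(λ,μ)` on coordinates
`(a, b, x, y)`: `[a,x] = -[x,a] = λ₁₁x + λ₁₂y`, `[a,y] = -[y,a] = λ₂₁x + λ₂₂y`,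
`[b,x] = -[x,b] = μ₁₁x + μ₁₂y`, `[b,y] = -[y,b] = μ₂₁x + μ₂₂y`, all other products
of basis vectors being zero. -/
def bBr {F : Type*} [Field F] (lam mu : Matrix (Fin 2) (Fin 2) F) :
    (F × F × F × F) → (F × F × F × F) → (F × F × F × F) :=
  fun u v =>
    (0, 0,
      u.1 * (lam 0 0 * v.2.2.1 + lam 1 0 * v.2.2.2)
        + u.2.1 * (mu 0 0 * v.2.2.1 + mu 1 0 * v.2.2.2)
        - v.1 * (lam 0 0 * u.2.2.1 + lam 1 0 * u.2.2.2)
        - v.2.1 * (mu 0 0 * u.2.2.1 + mu 1 0 * u.2.2.2),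
      u.1 * (lam 0 1 * v.2.2.1 + lam 1 1 * v.2.2.2)
        + u.2.1 * (mu 0 1 * v.2.2.1 + mu 1 1 * v.2.2.2)
        - v.1 * (lam 0 1 * u.2.2.1 + lam 1 1 * u.2.2.2)
        - v.2.1 * (mu 0 1 * u.2.2.1 + mu 1 1 * u.2.2.2))

/-- `b(λ,μ)` is a Lie algebra iff `λμ = μλ`. -/
theorem bBr_isLie_iff_commute {F : Type*} [Field F] (lam mu : Matrix (Fin 2) (Fin 2) F) :
    ((∀ u : F × F × F × F, bBr lam mu u u = 0) ∧
      ∀ u v w : F × F × F × F,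
        bBr lam mu (bBr lam mu u v) w + bBr lam mu (bBr lam mu v w) u
          + bBr lam mu (bBr lam mu w u) v = 0)
      ↔ lam * mu = mu * lam := by
  constructor
  · rintro ⟨-, hJ⟩
    have h1 := hJ (1,0,0,0) (0,1,0,0) (0,0,1,0)
    have h2 := hJ (1,0,0,0) (0,1,0,0) (0,0,0,1)
    simp [bBr, Prod.ext_iff] at h1 h2
    ext i j
    fin_cases i <;> fin_cases j <;>
      simp only [Matrix.mul_apply, Fin.sum_univ_two, Fin.isValue, Fin.mk_zero, Fin.mk_one] <;>
      first
        | linear_combination h1.1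
        | linear_combination h1.2
        | linear_combination h2.1
        | linear_combination h2.2
  · intro h
    have h00 := congrFun (congrFun h 0) 0
    have h01 := congrFun (congrFun h 0) 1
    have h10 := congrFun (congrFun h 1) 0
    have h11 := congrFun (congrFun h 1) 1
    simp [Matrix.mul_apply, Fin.sum_univ_two] at h00 h01 h10 h11
    refine ⟨fun u => by
      simp only [bBr, Prod.ext_iff, Prod.fst_zero, Prod.snd_zero]
      exact ⟨trivial, trivial, by ring, by ring⟩, fun u v w => ?_⟩
    set X := (u.1*w.2.1 - u.2.1*w.1)*v.2.2.1 + (w.1*v.2.1 - w.2.1*v.1)*u.2.2.1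
      + (v.1*u.2.1 - v.2.1*u.1)*w.2.2.1 with hX
    set Y := (u.1*w.2.1 - u.2.1*w.1)*v.2.2.2 + (w.1*v.2.1 - w.2.1*v.1)*u.2.2.2
      + (v.1*u.2.1 - v.2.1*u.1)*w.2.2.2 with hY
    simp only [bBr, Prod.ext_iff, Prod.fst_add, Prod.snd_add, Prod.mk_add_mk]
    refine ⟨by norm_num, by norm_num, ?_, ?_⟩
    · show _ = (0:F×F×F×F).2.2.1
      simp only [Prod.snd_zero, Prod.fst_zero]
      linear_combination (-X)*h00 + (-Y)*h10
    · show _ = (0:F×F×F×F).2.2.2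
      simp only [Prod.snd_zero]
      linear_combination (-X)*h01 + (-Y)*h11
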